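/- arXiv:2210.09630 — 5 statements merged into one kernel-verified Lean document; each statement's English description precedes it below -/
import Mathlib

section
/- The formula ◇₁◇₂p ↔ ◇₂◇₁p is not valid on all dependent product frames: there exists a d-product frame and a valuation with a world where ◇₁◇₂p holds but ◇₂◇₁p fails. -/
/-- Formulas of two-dimensional hybrid logic. -/
inductive Form (P N1 N2 : Type) : Type
  | prop : P → Form P N1 N2
  | nom1 : N1 → Form P N1 N2
  | nom2 : N2 → Form P N1 N2
  | neg  : Form P N1 N2 → Form P N1 N2
  | and  : Form P N1 N2 → Form P N1 N2 → Form P N1 N2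
  | dia1 : Form P N1 N2 → Form P N1 N2
  | dia2 : Form P N1 N2 → Form P N1 N2
  | at1  : N1 → Form P N1 N2 → Form P N1 N2
  | at2  : N2 → Form P N1 N2 → Form P N1 N2

/-- A dependent product (d-product) Kripke model: the second accessibility
relation `R2 x` depends on the first coordinate `x ∈ W₁`. -/
structure DModel (P N1 N2 W1 W2 : Type) : Type where
  R1 : W1 → W1 → Prop
  R2 : W1 → W2 → W2 → Prop
  V  : P → W1 × W2 → Prop
  v1 : N1 → W1
  v2 : N2 → W2

variable {P N1 N2 W1 W2 : Type}

/-- Horizontal accessibility of a d-product model. -/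
def DModel.Rh (M : DModel P N1 N2 W1 W2) (w w' : W1 × W2) : Prop :=
  M.R1 w.1 w'.1 ∧ w.2 = w'.2

/-- Vertical accessibility of a d-product model (depends on the current
first coordinate). -/
def DModel.Rv (M : DModel P N1 N2 W1 W2) (w w' : W1 × W2) : Prop :=
  w.1 = w'.1 ∧ M.R2 w.1 w.2 w'.2

/-- Satisfaction in a d-product model. -/
def DModel.sat (M : DModel P N1 N2 W1 W2) : W1 × W2 → Form P N1 N2 → Prop
  | w, .prop p  => M.V p w
  | w, .nom1 i  => w.1 = M.v1 i
  | w, .nom2 a  => w.2 = M.v2 a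
  | w, .neg φ   => ¬ M.sat w φ
  | w, .and φ ψ => M.sat w φ ∧ M.sat w ψ
  | w, .dia1 φ  => ∃ w', M.Rh w w' ∧ M.sat w' φ
  | w, .dia2 φ  => ∃ w', M.Rv w w' ∧ M.sat w' φ
  | w, .at1 i φ => M.sat (M.v1 i, w.2) φ
  | w, .at2 a φ => M.sat (w.1, M.v2 a) φ

/-- `◇₁◇₂p ↔ ◇₂◇₁p` is not valid on all d-product frames:
there is a d-product frame, a valuation and a world where `◇₁◇₂p` holds
but `◇₂◇₁p` fails. -/
theorem dia_comm_not_valid_dproduct :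
    ∃ (W1 W2 : Type) (M : DModel ℕ ℕ ℕ W1 W2) (w : W1 × W2) (p : ℕ),
      M.sat w (Form.dia1 (Form.dia2 (Form.prop p))) ∧
        ¬ M.sat w (Form.dia2 (Form.dia1 (Form.prop p))) := by
  refine ⟨Bool, Bool,
    { R1 := fun a b => a = false ∧ b = true,
      R2 := fun x y y' => x = true ∧ y = false ∧ y' = true,
      V := fun _ w => w = (true, true),
      v1 := fun _ => false, v2 := fun _ => false },
    (false, false), 0, ?_, ?_⟩
  · exact ⟨(true, false), ⟨⟨rfl, rfl⟩, rfl⟩, (true, true), ⟨rfl, rfl, rfl, rfl⟩, rfl⟩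
  · rintro ⟨w', ⟨_, h, _, _⟩, _⟩
    exact Bool.false_ne_true h
end

section
/- Let Θ be a saturated open branch of an HPL tableau. Then the relation i ∼¹_Θ j defined by '@ᵢj occurs in Θ' is an equivalence relation on the set of right nominals of the first sort occurring in Θ. -/
/-- Let `Θ` be a saturated open branch of an HPL tableau,
modelled abstractly by the predicate `At`, where `At i j` means that the
formula `@ᵢj` occurs in `Θ`.  Saturation under the rule Id'₁ means: if
`@ᵢs ∈ Θ` and `@ᵢj ∈ Θ` then `@ⱼs ∈ Θ`.  A right nominal is a nominal `s`
such that `@ₜs ∈ Θ` for some `t`.  Then the relation `i ∼ j iff @ᵢj ∈ Θ`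
is an equivalence relation on the right nominals of the first sort. -/
theorem branch_rel_equivalence {N1 : Type} (At : N1 → N1 → Prop)
    (id'₁ : ∀ i s j, At i s → At i j → At j s) :
    Equivalence (fun i j : {s : N1 // ∃ t, At t s} => At i.1 j.1) := by
  have refl : ∀ i : {s : N1 // ∃ t, At t s}, At i.1 i.1 := by
    rintro ⟨i, t, hti⟩
    exact id'₁ t i i hti hti
  refine ⟨refl, ?_, ?_⟩
  · intro i j hij
    exact id'₁ i.1 i.1 j.1 (refl i) hij
  · intro i j k hij hjk
    exact id'₁ j.1 k.1 i.1 hjk (id'₁ i.1 i.1 j.1 (refl i) hij)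
end

section
/- Let Θ be a saturated branch. If s is a right nominal occurring in Θ, then @_{u_Θ(s)} s ∈ Θ, where u_Θ is the urfather function. -/
open Classical in
/-- The urfather of a nominal `s` on a branch modelled by `At`
(`At i j` means `@ᵢj` occurs in the branch): the minimum of the
equivalence class `[j]` of some `j` with `@ₛj` in the branch, and `s`
itself if there is no such `j`. -/
noncomputable def urf (At : ℕ → ℕ → Prop) (s : ℕ) : ℕ :=
  if h : ∃ j, At s j then sInf {k | At h.choose k} else s

/-- if `Θ` (modelled by `At`, closed under rule Id'₁) is a
saturated branch and `s` is a right nominal occurring in `Θ`,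
then `@_{u_Θ(s)} s ∈ Θ`. -/
theorem urfather_right_nominal (At : ℕ → ℕ → Prop)
    (id'₁ : ∀ i s j, At i s → At i j → At j s)
    (s : ℕ) (hright : ∃ t, At t s) :
    At (urf At s) s := by
  obtain ⟨t, ht⟩ := hright
  have hss : At s s := id'₁ t s s ht ht
  have h : ∃ j, At s j := ⟨s, hss⟩
  have hj : At s h.choose := h.choose_spec
  have hjs : At h.choose s := id'₁ s s h.choose hss hj
  have hmem : s ∈ {k | At h.choose k} := hjs
  have hinf : sInf {k | At h.choose k} ∈ {k | At h.choose k} :=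
    Nat.sInf_mem ⟨s, hmem⟩
  have : At (sInf {k | At h.choose k}) s := id'₁ h.choose s _ hjs hinf
  simpa [urf, dif_pos h] using this
end

section
/- Every formula of the form @ᵢ@ₐφ occurring in an HPL tableau is a quasi-subformula of the tableau's root formula (quasi-subformula property). -/
/-- A product Kripke model: two Kripke frames plus a valuation interpreting
propositional variables as sets of pairs and nominals as named points. -/
structure ProductModel (P N1 N2 W1 W2 : Type) : Type where
  R1 : W1 → W1 → Prop
  R2 : W2 → W2 → Prop
  V  : P → W1 × W2 → Prop
  v1 : N1 → W1
  v2 : N2 → W2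

variable {P N1 N2 W1 W2 : Type}

/-- Horizontal accessibility. -/
def ProductModel.Rh (M : ProductModel P N1 N2 W1 W2) (w w' : W1 × W2) : Prop :=
  M.R1 w.1 w'.1 ∧ w.2 = w'.2

/-- Vertical accessibility. -/
def ProductModel.Rv (M : ProductModel P N1 N2 W1 W2) (w w' : W1 × W2) : Prop :=
  w.1 = w'.1 ∧ M.R2 w.2 w'.2

/-- Satisfaction in a product model. -/
def ProductModel.sat (M : ProductModel P N1 N2 W1 W2) : W1 × W2 → Form P N1 N2 → Prop
  | w, .prop p  => M.V p w
  | w, .nom1 i  => w.1 = M.v1 i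
  | w, .nom2 a  => w.2 = M.v2 a
  | w, .neg φ   => ¬ M.sat w φ
  | w, .and φ ψ => M.sat w φ ∧ M.sat w ψ
  | w, .dia1 φ  => ∃ w', M.Rh w w' ∧ M.sat w' φ
  | w, .dia2 φ  => ∃ w', M.Rv w w' ∧ M.sat w' φ
  | w, .at1 i φ => M.sat (M.v1 i, w.2) φ
  | w, .at2 a φ => M.sat (w.1, M.v2 a) φ

/-- Occurrence of a first-sort nominal in a formula. -/
def occ1 {P N1 N2 : Type} (j : N1) : Form P N1 N2 → Prop
  | .prop _   => False
  | .nom1 i   => i = j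
  | .nom2 _   => False
  | .neg φ    => occ1 j φ
  | .and φ ψ  => occ1 j φ ∨ occ1 j ψ
  | .dia1 φ   => occ1 j φ
  | .dia2 φ   => occ1 j φ
  | .at1 i φ  => i = j ∨ occ1 j φ
  | .at2 _ φ  => occ1 j φ

/-- Occurrence of a second-sort nominal in a formula. -/
def occ2 {P N1 N2 : Type} (b : N2) : Form P N1 N2 → Prop
  | .prop _   => False
  | .nom1 _   => False
  | .nom2 a   => a = b
  | .neg φ    => occ2 b φ
  | .and φ ψ  => occ2 b φ ∨ occ2 b ψ
  | .dia1 φ   => occ2 b φ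
  | .dia2 φ   => occ2 b φ
  | .at1 _ φ  => occ2 b φ
  | .at2 a φ  => a = b ∨ occ2 b φ

/-- Hybrid formulas over propositional variables and two sorts of nominals,
all indexed by natural numbers. -/
abbrev F := Form ℕ ℕ ℕ

/-- A first-sort nominal is fresh for a branch if it occurs in none of its
formulas. -/
def fresh1 (j : ℕ) (L : List F) : Prop := ∀ ψ ∈ L, ¬ occ1 j ψ

/-- A second-sort nominal is fresh for a branch if it occurs in none of its
formulas. -/
def fresh2 (b : ℕ) (L : List F) : Prop := ∀ ψ ∈ L, ¬ occ2 b ψ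

/-- `Subf φ ψ`: `φ` is a subformula of `ψ`. -/
inductive Subf : F → F → Prop
  | refl (φ) : Subf φ φ
  | neg  : Subf φ ψ → Subf φ (Form.neg ψ)
  | andL : Subf φ ψ₁ → Subf φ (Form.and ψ₁ ψ₂)
  | andR : Subf φ ψ₂ → Subf φ (Form.and ψ₁ ψ₂)
  | dia1 : Subf φ ψ → Subf φ (Form.dia1 ψ)
  | dia2 : Subf φ ψ → Subf φ (Form.dia2 ψ)
  | at1  : Subf φ ψ → Subf φ (Form.at1 i ψ)
  | at2  : Subf φ ψ → Subf φ (Form.at2 a ψ)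

/-- `@ᵢ@ₐφ` is a quasi-subformula of `@ⱼ@_bψ` iff `φ` is a subformula of `ψ`
or `φ = ¬χ` with `χ` a subformula of `ψ`. -/
def QuasiSub (φ ψ : F) : Prop :=
  Subf φ ψ ∨ ∃ χ, φ = Form.neg χ ∧ Subf χ ψ

/-- A branch (list of formulas, most recent first) is closed if it contains a
contradiction at some prefix. -/
def ClosedL (L : List F) : Prop :=
  (∃ i a φ, Form.at1 i (Form.at2 a φ) ∈ L ∧ Form.at1 i (Form.at2 a (Form.neg φ)) ∈ L) ∨
  (∃ i φ, Form.at1 i φ ∈ L ∧ Form.at1 i (Form.neg φ) ∈ L) ∨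
  (∃ a φ, Form.at2 a φ ∈ L ∧ Form.at2 a (Form.neg φ) ∈ L)

/-- One application of an HPL tableau rule extending a branch `L`
(for the branching rule `[¬∧]`, the branch picks one of the two sides). -/
inductive TabStep : List F → List F → Prop
  | negneg : Form.at1 i (Form.at2 a (Form.neg (Form.neg φ))) ∈ L →
      TabStep L (Form.at1 i (Form.at2 a φ) :: L)
  | and : Form.at1 i (Form.at2 a (Form.and φ ψ)) ∈ L →
      TabStep L (Form.at1 i (Form.at2 a ψ) :: Form.at1 i (Form.at2 a φ) :: L)
  | negAndL : Form.at1 i (Form.at2 a (Form.neg (Form.and φ ψ))) ∈ L →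
      TabStep L (Form.at1 i (Form.at2 a (Form.neg φ)) :: L)
  | negAndR : Form.at1 i (Form.at2 a (Form.neg (Form.and φ ψ))) ∈ L →
      TabStep L (Form.at1 i (Form.at2 a (Form.neg ψ)) :: L)
  | dia1 : Form.at1 i (Form.at2 a (Form.dia1 φ)) ∈ L → fresh1 j L →
      TabStep L (Form.at1 j (Form.at2 a φ) :: Form.at1 i (Form.dia1 (Form.nom1 j)) :: L)
  | dia2 : Form.at1 i (Form.at2 a (Form.dia2 φ)) ∈ L → fresh2 b L →
      TabStep L (Form.at1 i (Form.at2 b φ) :: Form.at2 a (Form.dia2 (Form.nom2 b)) :: L)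
  | negDia1 : Form.at1 i (Form.at2 a (Form.neg (Form.dia1 φ))) ∈ L →
      Form.at1 i (Form.dia1 (Form.nom1 j)) ∈ L →
      TabStep L (Form.at1 j (Form.at2 a (Form.neg φ)) :: L)
  | negDia2 : Form.at1 i (Form.at2 a (Form.neg (Form.dia2 φ))) ∈ L →
      Form.at2 a (Form.dia2 (Form.nom2 b)) ∈ L →
      TabStep L (Form.at1 i (Form.at2 b (Form.neg φ)) :: L)
  | at1 : Form.at1 i (Form.at2 a (Form.at1 j φ)) ∈ L →
      TabStep L (Form.at1 j (Form.at2 a φ) :: L)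
  | at2 : Form.at1 i (Form.at2 a (Form.at2 b φ)) ∈ L →
      TabStep L (Form.at1 i (Form.at2 b φ) :: L)
  | negAt1 : Form.at1 i (Form.at2 a (Form.neg (Form.at1 j φ))) ∈ L →
      TabStep L (Form.at1 j (Form.at2 a (Form.neg φ)) :: L)
  | negAt2 : Form.at1 i (Form.at2 a (Form.neg (Form.at2 b φ))) ∈ L →
      TabStep L (Form.at1 i (Form.at2 b (Form.neg φ)) :: L)
  | red1a : Form.at1 i (Form.at2 a (Form.nom1 k)) ∈ L →
      TabStep L (Form.at1 i (Form.nom1 k) :: L)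
  | red1b : Form.at1 i (Form.at2 a (Form.neg (Form.nom1 k))) ∈ L →
      TabStep L (Form.at1 i (Form.neg (Form.nom1 k)) :: L)
  | red2a : Form.at1 i (Form.at2 a (Form.nom2 c)) ∈ L →
      TabStep L (Form.at2 a (Form.nom2 c) :: L)
  | red2b : Form.at1 i (Form.at2 a (Form.neg (Form.nom2 c))) ∈ L →
      TabStep L (Form.at2 a (Form.neg (Form.nom2 c)) :: L)
  | neg1 : Form.at1 i (Form.neg (Form.nom1 j)) ∈ L →
      TabStep L (Form.at1 j (Form.nom1 j) :: L)
  | neg2 : Form.at2 a (Form.neg (Form.nom2 b)) ∈ L →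
      TabStep L (Form.at2 b (Form.nom2 b) :: L)
  | id1 : Form.at1 i (Form.at2 a φ) ∈ L → Form.at1 i (Form.nom1 j) ∈ L →
      TabStep L (Form.at1 j (Form.at2 a φ) :: L)
  | id2 : Form.at1 i (Form.at2 a φ) ∈ L → Form.at2 a (Form.nom2 b) ∈ L →
      TabStep L (Form.at1 i (Form.at2 b φ) :: L)
  | id'1a : Form.at1 i (Form.nom1 k) ∈ L → Form.at1 i (Form.nom1 j) ∈ L →
      TabStep L (Form.at1 j (Form.nom1 k) :: L)
  | id'1b : Form.at1 i (Form.neg (Form.nom1 k)) ∈ L → Form.at1 i (Form.nom1 j) ∈ L →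
      TabStep L (Form.at1 j (Form.neg (Form.nom1 k)) :: L)
  | id'2a : Form.at2 a (Form.nom2 c) ∈ L → Form.at2 a (Form.nom2 b) ∈ L →
      TabStep L (Form.at2 b (Form.nom2 c) :: L)
  | id'2b : Form.at2 a (Form.neg (Form.nom2 c)) ∈ L → Form.at2 a (Form.nom2 b) ∈ L →
      TabStep L (Form.at2 b (Form.neg (Form.nom2 c)) :: L)

/-- Branches of an HPL tableau with root formula `ρ`, generated from the root
by repeatedly applying the tableau rules. -/
inductive Branch (ρ : F) : List F → Prop
  | root : Branch ρ [ρ]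
  | step : Branch ρ L → TabStep L L' → Branch ρ L'


theorem subf_trans {a b c : F} (h1 : Subf a b) (h2 : Subf b c) : Subf a c := by
  induction h2 with
  | refl => exact h1
  | neg _ ih => exact Subf.neg ih
  | andL _ ih => exact Subf.andL ih
  | andR _ ih => exact Subf.andR ih
  | dia1 _ ih => exact Subf.dia1 ih
  | dia2 _ ih => exact Subf.dia2 ih
  | at1 _ ih => exact Subf.at1 ih
  | at2 _ ih => exact Subf.at2 ih

theorem qs_neg {Y ρ : F} (h : QuasiSub (Form.neg Y) ρ) : Subf Y ρ := by
  rcases h with h | ⟨χ, hx, hχ⟩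
  · exact subf_trans (Subf.neg (Subf.refl _)) h
  · injection hx with h'; subst h'; exact hχ

theorem qs_nonneg {X ρ : F} (h : QuasiSub X ρ) (hn : ∀ χ, X ≠ Form.neg χ) :
    Subf X ρ := by
  rcases h with h | ⟨χ, hx, _⟩
  · exact h
  · exact absurd hx (hn χ)

theorem step_pres {ρ : F} {L L' : List F} (hs : TabStep L L')
    (IH : ∀ j b ψ, Form.at1 j (Form.at2 b ψ) ∈ L → QuasiSub ψ ρ) :
    ∀ j b ψ, Form.at1 j (Form.at2 b ψ) ∈ L' → QuasiSub ψ ρ := by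
  intro j b ψ hmem
  cases hs with
  | negneg h =>
      rcases List.mem_cons.mp hmem with he | hm
      · simp only [Form.at1.injEq, Form.at2.injEq] at he
        obtain ⟨rfl, rfl, rfl⟩ := he
        exact Or.inl (subf_trans (Subf.neg (Subf.refl _)) (qs_neg (IH _ _ _ h)))
      · exact IH _ _ _ hm
  | and h =>
      rcases List.mem_cons.mp hmem with he | hm
      · simp only [Form.at1.injEq, Form.at2.injEq] at he
        obtain ⟨rfl, rfl, rfl⟩ := he
        exact Or.inl (subf_trans (Subf.andR (Subf.refl _)) (qs_nonneg (IH _ _ _ h) nofun))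
      rcases List.mem_cons.mp hm with he | hm
      · simp only [Form.at1.injEq, Form.at2.injEq] at he
        obtain ⟨rfl, rfl, rfl⟩ := he
        exact Or.inl (subf_trans (Subf.andL (Subf.refl _)) (qs_nonneg (IH _ _ _ h) nofun))
      · exact IH _ _ _ hm
  | negAndL h =>
      rcases List.mem_cons.mp hmem with he | hm
      · simp only [Form.at1.injEq, Form.at2.injEq] at he
        obtain ⟨rfl, rfl, rfl⟩ := he
        exact Or.inr ⟨_, rfl, subf_trans (Subf.andL (Subf.refl _)) (qs_neg (IH _ _ _ h))⟩
      · exact IH _ _ _ hm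
  | negAndR h =>
      rcases List.mem_cons.mp hmem with he | hm
      · simp only [Form.at1.injEq, Form.at2.injEq] at he
        obtain ⟨rfl, rfl, rfl⟩ := he
        exact Or.inr ⟨_, rfl, subf_trans (Subf.andR (Subf.refl _)) (qs_neg (IH _ _ _ h))⟩
      · exact IH _ _ _ hm
  | dia1 h hf =>
      rcases List.mem_cons.mp hmem with he | hm
      · simp only [Form.at1.injEq, Form.at2.injEq] at he
        obtain ⟨rfl, rfl, rfl⟩ := he
        exact Or.inl (subf_trans (Subf.dia1 (Subf.refl _)) (qs_nonneg (IH _ _ _ h) nofun))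
      rcases List.mem_cons.mp hm with he | hm
      · simp at he
      · exact IH _ _ _ hm
  | dia2 h hf =>
      rcases List.mem_cons.mp hmem with he | hm
      · simp only [Form.at1.injEq, Form.at2.injEq] at he
        obtain ⟨rfl, rfl, rfl⟩ := he
        exact Or.inl (subf_trans (Subf.dia2 (Subf.refl _)) (qs_nonneg (IH _ _ _ h) nofun))
      rcases List.mem_cons.mp hm with he | hm
      · simp at he
      · exact IH _ _ _ hm
  | negDia1 h h2 =>
      rcases List.mem_cons.mp hmem with he | hm
      · simp only [Form.at1.injEq, Form.at2.injEq] at he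
        obtain ⟨rfl, rfl, rfl⟩ := he
        exact Or.inr ⟨_, rfl, subf_trans (Subf.dia1 (Subf.refl _)) (qs_neg (IH _ _ _ h))⟩
      · exact IH _ _ _ hm
  | negDia2 h h2 =>
      rcases List.mem_cons.mp hmem with he | hm
      · simp only [Form.at1.injEq, Form.at2.injEq] at he
        obtain ⟨rfl, rfl, rfl⟩ := he
        exact Or.inr ⟨_, rfl, subf_trans (Subf.dia2 (Subf.refl _)) (qs_neg (IH _ _ _ h))⟩
      · exact IH _ _ _ hm
  | at1 h =>
      rcases List.mem_cons.mp hmem with he | hm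
      · simp only [Form.at1.injEq, Form.at2.injEq] at he
        obtain ⟨rfl, rfl, rfl⟩ := he
        exact Or.inl (subf_trans (Subf.at1 (Subf.refl _)) (qs_nonneg (IH _ _ _ h) nofun))
      · exact IH _ _ _ hm
  | at2 h =>
      rcases List.mem_cons.mp hmem with he | hm
      · simp only [Form.at1.injEq, Form.at2.injEq] at he
        obtain ⟨rfl, rfl, rfl⟩ := he
        exact Or.inl (subf_trans (Subf.at2 (Subf.refl _)) (qs_nonneg (IH _ _ _ h) nofun))
      · exact IH _ _ _ hm
  | negAt1 h =>
      rcases List.mem_cons.mp hmem with he | hm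
      · simp only [Form.at1.injEq, Form.at2.injEq] at he
        obtain ⟨rfl, rfl, rfl⟩ := he
        exact Or.inr ⟨_, rfl, subf_trans (Subf.at1 (Subf.refl _)) (qs_neg (IH _ _ _ h))⟩
      · exact IH _ _ _ hm
  | negAt2 h =>
      rcases List.mem_cons.mp hmem with he | hm
      · simp only [Form.at1.injEq, Form.at2.injEq] at he
        obtain ⟨rfl, rfl, rfl⟩ := he
        exact Or.inr ⟨_, rfl, subf_trans (Subf.at2 (Subf.refl _)) (qs_neg (IH _ _ _ h))⟩
      · exact IH _ _ _ hm
  | red1a h =>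
      rcases List.mem_cons.mp hmem with he | hm
      · simp at he
      · exact IH _ _ _ hm
  | red1b h =>
      rcases List.mem_cons.mp hmem with he | hm
      · simp at he
      · exact IH _ _ _ hm
  | red2a h =>
      rcases List.mem_cons.mp hmem with he | hm
      · simp at he
      · exact IH _ _ _ hm
  | red2b h =>
      rcases List.mem_cons.mp hmem with he | hm
      · simp at he
      · exact IH _ _ _ hm
  | neg1 h =>
      rcases List.mem_cons.mp hmem with he | hm
      · simp at he
      · exact IH _ _ _ hm
  | neg2 h =>
      rcases List.mem_cons.mp hmem with he | hm
      · simp at he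
      · exact IH _ _ _ hm
  | id1 h h2 =>
      rcases List.mem_cons.mp hmem with he | hm
      · simp only [Form.at1.injEq, Form.at2.injEq] at he
        obtain ⟨rfl, rfl, rfl⟩ := he
        exact IH _ _ _ h
      · exact IH _ _ _ hm
  | id2 h h2 =>
      rcases List.mem_cons.mp hmem with he | hm
      · simp only [Form.at1.injEq, Form.at2.injEq] at he
        obtain ⟨rfl, rfl, rfl⟩ := he
        exact IH _ _ _ h
      · exact IH _ _ _ hm
  | id'1a h h2 =>
      rcases List.mem_cons.mp hmem with he | hm
      · simp at he
      · exact IH _ _ _ hm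
  | id'1b h h2 =>
      rcases List.mem_cons.mp hmem with he | hm
      · simp at he
      · exact IH _ _ _ hm
  | id'2a h h2 =>
      rcases List.mem_cons.mp hmem with he | hm
      · simp at he
      · exact IH _ _ _ hm
  | id'2b h h2 =>
      rcases List.mem_cons.mp hmem with he | hm
      · simp at he
      · exact IH _ _ _ hm

/-- quasi-subformula property: every formula of the form
`@ᵢ@ₐφ` occurring in a branch of an HPL tableau with root formula
`@ᵢ@ₐ¬φ` (with `i`, `a` not occurring in `φ`) is a quasi-subformula of the
root formula. -/
theorem quasi_subformula_property (i a : ℕ) (φ : F)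
    (hi : ¬ occ1 i φ) (ha : ¬ occ2 a φ) (L : List F)
    (hL : Branch (Form.at1 i (Form.at2 a (Form.neg φ))) L) :
    ∀ j b ψ, Form.at1 j (Form.at2 b ψ) ∈ L → QuasiSub ψ (Form.neg φ) := by
  induction hL with
  | root =>
      intro j b ψ hmem
      simp only [List.mem_singleton, Form.at1.injEq, Form.at2.injEq] at hmem
      obtain ⟨rfl, rfl, rfl⟩ := hmem
      exact Or.inl (Subf.refl _)
  | step _ hs ih => exact step_pres hs ih
end

section
/- A dependent product frame 𝔉 is decreasing (for all x,x' ∈ W₁, x R₁ x' implies R₂(x) ⊇ R₂(x')) if and only if the formula ◇₁@ₐ◇₂b → @ₐ◇₂b is valid on 𝔉 (for all valuations and all second-sort nominals a, b). -/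
variable {P N1 N2 W1 W2 : Type}

/-- The implication connective, defined from `¬` and `∧`. -/
def Form.imp {P N1 N2 : Type} (φ ψ : Form P N1 N2) : Form P N1 N2 :=
  Form.neg (Form.and φ (Form.neg ψ))

/-- A dependent product frame `(R1, R2)` is decreasing if
`x R₁ x'` implies `R₂(x) ⊇ R₂(x')`. -/
def Decreasing {W1 W2 : Type} (R1 : W1 → W1 → Prop)
    (R2 : W1 → W2 → W2 → Prop) : Prop :=
  ∀ x x', R1 x x' → ∀ y y', R2 x' y y' → R2 x y y'

/-- a d-product frame is decreasing iff the formula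
`◇₁@ₐ◇₂b → @ₐ◇₂b` (AxDec) is valid on it, i.e. true at every world under
every valuation and for all second-sort nominals `a`, `b`. -/
theorem decreasing_iff_axdec {W1 W2 : Type} (R1 : W1 → W1 → Prop)
    (R2 : W1 → W2 → W2 → Prop) :
    Decreasing R1 R2 ↔
      ∀ (V : ℕ → W1 × W2 → Prop) (v1 : ℕ → W1) (v2 : ℕ → W2) (a b : ℕ)
        (w : W1 × W2),
        (DModel.mk (P := ℕ) (N1 := ℕ) (N2 := ℕ) R1 R2 V v1 v2).sat w
          (Form.imp (Form.dia1 (Form.at2 a (Form.dia2 (Form.nom2 b))))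
            (Form.at2 a (Form.dia2 (Form.nom2 b)))) := by
  constructor
  · rintro hdec V v1 v2 a b w ⟨⟨w', ⟨hr1, -⟩, ⟨w'', ⟨heq, hr2⟩, hb⟩⟩, hneg⟩
    simp only [DModel.sat] at hb hneg
    dsimp at hr2
    exact hneg ⟨(w.1, v2 b), ⟨rfl, hdec _ _ hr1 _ _ (hb ▸ hr2)⟩, rfl⟩
  · intro hval x x' hr1 y y' hr2
    have h := hval (fun _ _ => True) (fun _ => x) (fun n => if n = 0 then y else y') 0 1 (x, y)
    simp only [DModel.sat, Form.imp, not_and, not_not] at h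
    obtain ⟨w'', ⟨heq, hr⟩, hb⟩ := h ⟨(x', y), ⟨hr1, rfl⟩, (x', y'), ⟨rfl, by simpa using hr2⟩, by simp⟩
    simp at heq hb hr
    rwa [hb] at hr
end
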